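/- arXiv:2501.05285 — 7 statements merged into one kernel-verified Lean document; each statement's English description precedes it below -/
import Mathlib

section
/- Let k₁, k₂, γ be real numbers with γ > 0, and let ξ₁, ξ₂, d : ℝ → ℝ be functions such that for every t: ξ₁ has derivative ξ₂(t) at t, ξ₂ has derivative −(1 + k₁k₂)·ξ₁(t) − (k₁ + k₂)·ξ₂(t) + d(t) at t, and d has derivative −γ·(k₁·ξ₁(t) + ξ₂(t)) at t. Define V(t) = ½·ξ₁(t)² + ½·(ξ₂(t) + k₁·ξ₁(t))² + (1/(2γ))·d(t)². Then for every t, V has derivative −k₁·ξ₁(t)² − k₂·(ξ₂(t) + k₁·ξ₁(t))² at t; in particular, if k₁ ≥ 0 and k₂ ≥ 0, the derivative of V is everywhere nonpositive. -/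
/-! In the backstepping coordinates `α₁ = ξ₁`, `α₂ = ξ₂ + k₁ ξ₁` the loop reads
`α₁' = -k₁ α₁ + α₂`, `α₂' = -α₁ - k₂ α₂ + d`, `d' = -γ α₂`. Differentiating
`V = ½ α₁² + ½ α₂² + d² / (2γ)`, the cross terms `α₁ α₂` and `α₂ d` cancel in pairs,
leaving `-k₁ α₁² - k₂ α₂²`. -/

theorem HasDerivAt.const_mul_sq {f : ℝ → ℝ} {f' t : ℝ} (c : ℝ) (hf : HasDerivAt f f' t) :
    HasDerivAt (fun s => c * f s ^ 2) (2 * c * f t * f') t :=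
  ((hf.fun_pow 2).const_mul c).congr_deriv (by ring)

theorem lyapunov_derivative_inner_loop
    (k₁ k₂ γ : ℝ) (hγ : 0 < γ)
    (ξ₁ ξ₂ d : ℝ → ℝ)
    (hξ₁ : ∀ t, HasDerivAt ξ₁ (ξ₂ t) t)
    (hξ₂ : ∀ t, HasDerivAt ξ₂ (-(1 + k₁ * k₂) * ξ₁ t - (k₁ + k₂) * ξ₂ t + d t) t)
    (hd : ∀ t, HasDerivAt d (-γ * (k₁ * ξ₁ t + ξ₂ t)) t)
    (V : ℝ → ℝ)
    (hV : V = fun t => (1/2) * (ξ₁ t)^2 + (1/2) * (ξ₂ t + k₁ * ξ₁ t)^2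
                + (1/(2*γ)) * (d t)^2) :
    ∀ t, HasDerivAt V (-k₁ * (ξ₁ t)^2 - k₂ * (ξ₂ t + k₁ * ξ₁ t)^2) t ∧
      (0 ≤ k₁ → 0 ≤ k₂ → -k₁ * (ξ₁ t)^2 - k₂ * (ξ₂ t + k₁ * ξ₁ t)^2 ≤ 0) := by
  intro t
  have hγ₀ : γ ≠ 0 := hγ.ne'
  have hα₂ : HasDerivAt (fun s => ξ₂ s + k₁ * ξ₁ s)
      (-ξ₁ t - k₂ * (ξ₂ t + k₁ * ξ₁ t) + d t) t :=
    ((hξ₂ t).fun_add ((hξ₁ t).const_mul k₁)).congr_deriv (by ring)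
  refine ⟨?_, fun hk₁ hk₂ => ?_⟩
  · subst hV
    refine ((((hξ₁ t).const_mul_sq (1 / 2)).fun_add (hα₂.const_mul_sq (1 / 2))).fun_add
      ((hd t).const_mul_sq (1 / (2 * γ)))).congr_deriv ?_
    field_simp
    ring
  · have h₁ := mul_nonneg hk₁ (sq_nonneg (ξ₁ t))
    have h₂ := mul_nonneg hk₂ (sq_nonneg (ξ₂ t + k₁ * ξ₁ t))
    linarith
end

section
/- Let k₁, k₂, γ be real numbers with k₁ ≥ 0, k₂ ≥ 0, γ > 0, and let ξ₁, ξ₂, d : ℝ → ℝ satisfy, for every t: ξ₁' (t) = ξ₂(t), ξ₂'(t) = −(1 + k₁k₂)·ξ₁(t) − (k₁ + k₂)·ξ₂(t) + d(t), and d'(t) = −γ·(k₁·ξ₁(t) + ξ₂(t)) (derivatives in the sense of HasDerivAt). Then for all t ≥ 0: ξ₁(t)² + (ξ₂(t) + k₁·ξ₁(t))² + d(t)²/γ ≤ ξ₁(0)² + (ξ₂(0) + k₁·ξ₁(0))² + d(0)²/γ. -/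
/-!
In the coordinates `ξ₁` and `z = ξ₂ + k₁ ξ₁` the system reads `ξ₁' = z - k₁ ξ₁`,
`z' = -ξ₁ - k₂ z + d`, `d' = -γ z`. For `V = ξ₁² + z² + d²/γ` the cross terms `ξ₁ z` and `d z`
cancel, leaving `V' = -2 k₁ ξ₁² - 2 k₂ z² ≤ 0`, so `V` is antitone along solutions.
-/

noncomputable def innerLoopLyapunov (k₁ γ ξ₁ ξ₂ d : ℝ) : ℝ :=
  ξ₁ ^ 2 + (ξ₂ + k₁ * ξ₁) ^ 2 + d ^ 2 / γ

section InnerLoop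

variable {k₁ k₂ γ : ℝ} {ξ₁ ξ₂ d : ℝ → ℝ}

theorem hasDerivAt_innerLoopLyapunov (hγ : γ ≠ 0)
    (hξ₁ : ∀ t, HasDerivAt ξ₁ (ξ₂ t) t)
    (hξ₂ : ∀ t, HasDerivAt ξ₂ (-(1 + k₁ * k₂) * ξ₁ t - (k₁ + k₂) * ξ₂ t + d t) t)
    (hd : ∀ t, HasDerivAt d (-γ * (k₁ * ξ₁ t + ξ₂ t)) t) (t : ℝ) :
    HasDerivAt (fun s => innerLoopLyapunov k₁ γ (ξ₁ s) (ξ₂ s) (d s))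
      (-2 * k₁ * ξ₁ t ^ 2 - 2 * k₂ * (ξ₂ t + k₁ * ξ₁ t) ^ 2) t := by
  have hz := (hξ₂ t).add ((hξ₁ t).const_mul k₁)
  refine ((((hξ₁ t).pow 2).add (hz.pow 2)).add (((hd t).pow 2).div_const γ)).congr_deriv ?_
  simp only [Pi.add_apply]
  field_simp
  ring

theorem innerLoopLyapunov_antitone (hk₁ : 0 ≤ k₁) (hk₂ : 0 ≤ k₂) (hγ : γ ≠ 0)
    (hξ₁ : ∀ t, HasDerivAt ξ₁ (ξ₂ t) t)
    (hξ₂ : ∀ t, HasDerivAt ξ₂ (-(1 + k₁ * k₂) * ξ₁ t - (k₁ + k₂) * ξ₂ t + d t) t)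
    (hd : ∀ t, HasDerivAt d (-γ * (k₁ * ξ₁ t + ξ₂ t)) t) :
    Antitone fun s => innerLoopLyapunov k₁ γ (ξ₁ s) (ξ₂ s) (d s) := by
  refine antitone_of_hasDerivAt_nonpos (hasDerivAt_innerLoopLyapunov hγ hξ₁ hξ₂ hd) fun t => ?_
  change -2 * k₁ * ξ₁ t ^ 2 - 2 * k₂ * (ξ₂ t + k₁ * ξ₁ t) ^ 2 ≤ 0
  have h₁ : 0 ≤ k₁ * ξ₁ t ^ 2 := by positivity
  have h₂ : 0 ≤ k₂ * (ξ₂ t + k₁ * ξ₁ t) ^ 2 := by positivity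
  linarith

end InnerLoop

theorem inner_loop_sublevel_bound
    (k₁ k₂ γ : ℝ) (hk₁ : 0 ≤ k₁) (hk₂ : 0 ≤ k₂) (hγ : 0 < γ)
    (ξ₁ ξ₂ d : ℝ → ℝ)
    (hξ₁ : ∀ t, HasDerivAt ξ₁ (ξ₂ t) t)
    (hξ₂ : ∀ t, HasDerivAt ξ₂ (-(1 + k₁ * k₂) * ξ₁ t - (k₁ + k₂) * ξ₂ t + d t) t)
    (hd : ∀ t, HasDerivAt d (-γ * (k₁ * ξ₁ t + ξ₂ t)) t) :
    ∀ t, 0 ≤ t →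
      (ξ₁ t)^2 + (ξ₂ t + k₁ * ξ₁ t)^2 + (d t)^2 / γ
        ≤ (ξ₁ 0)^2 + (ξ₂ 0 + k₁ * ξ₁ 0)^2 + (d 0)^2 / γ :=
  fun _ ht => innerLoopLyapunov_antitone hk₁ hk₂ hγ.ne' hξ₁ hξ₂ hd ht
end

section
/- Let k₁, k₂, γ be real numbers with k₁ > 0, k₂ > 0, γ > 0, and let ξ₁, ξ₂, d : ℝ → ℝ satisfy, for every t: ξ₁'(t) = ξ₂(t), ξ₂'(t) = −(1 + k₁k₂)·ξ₁(t) − (k₁ + k₂)·ξ₂(t) + d(t), and d'(t) = −γ·(k₁·ξ₁(t) + ξ₂(t)) (derivatives in the sense of HasDerivAt). Then ξ₁(t) → 0, ξ₂(t) → 0, and d(t) → 0 as t → ∞. -/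
/-!
In the coordinates `x = ξ₁`, `w = ξ₂ + k₁ ξ₁`, `z = d` the system reads
`x' = -k₁ x + w`, `w' = -x - k₂ w + z`, `z' = -γ w`. The paper's Lyapunov function, scaled
to `γ (x² + w²) + z²`, only dissipates `k₁ x² + k₂ w²`, which is why the paper needs LaSalle.
Adding the small cross term `-2εγ w z` makes it a strict Lyapunov function: for `ε` small
it is comparable to `γ (x² + w²) + z²` and its derivative is bounded by a negative multiple
of itself, so it decays exponentially, and so do all three coordinates.
-/

open Filter Topology

theorem le_mul_exp_neg_of_hasDerivAt_le_neg_mul {f f' : ℝ → ℝ} {c : ℝ}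
    (hf : ∀ t, HasDerivAt f (f' t) t) (hf' : ∀ t, f' t ≤ -c * f t) {t : ℝ} (ht : 0 ≤ t) :
    f t ≤ f 0 * Real.exp (-(c * t)) := by
  have hg : ∀ s, HasDerivAt (fun s => f s * Real.exp (c * s))
      (f' s * Real.exp (c * s) + f s * (Real.exp (c * s) * c)) s := fun s =>
    (hf s).mul (by simpa using ((hasDerivAt_id s).const_mul c).exp)
  have hanti : Antitone fun s => f s * Real.exp (c * s) := by
    refine antitone_of_deriv_nonpos (fun s => (hg s).differentiableAt) fun s => ?_
    rw [(hg s).deriv]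
    nlinarith [hf' s, Real.exp_pos (c * s)]
  have hmono := hanti ht
  simp only [mul_zero, Real.exp_zero, mul_one] at hmono
  rw [Real.exp_neg, ← div_eq_mul_inv, le_div_iff₀ (Real.exp_pos _)]
  exact hmono

theorem tendsto_zero_of_hasDerivAt_le_neg_mul {f f' : ℝ → ℝ} {c : ℝ} (hc : 0 < c)
    (hf : ∀ t, HasDerivAt f (f' t) t) (hf' : ∀ t, f' t ≤ -c * f t) (hf₀ : ∀ t, 0 ≤ f t) :
    Tendsto f atTop (𝓝 0) := by
  have hexp : Tendsto (fun t => f 0 * Real.exp (-(c * t))) atTop (𝓝 0) := by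
    simpa using (Real.tendsto_exp_atBot.comp
      (tendsto_neg_atTop_atBot.comp (tendsto_id.const_mul_atTop hc))).const_mul (f 0)
  exact squeeze_zero' (.of_forall hf₀)
    ((eventually_ge_atTop 0).mono fun _ ht => le_mul_exp_neg_of_hasDerivAt_le_neg_mul hf hf' ht)
    hexp

theorem tendsto_nhds_zero_of_mul_sq_le {α : Type*} {l : Filter α} {f g : α → ℝ} {a : ℝ}
    (ha : 0 < a) (hfg : ∀ t, a * f t ^ 2 ≤ g t) (hg : Tendsto g l (𝓝 0)) :
    Tendsto f l (𝓝 0) := by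
  refine squeeze_zero_norm (fun t => Real.abs_le_sqrt ?_) (by simpa using (hg.div_const a).sqrt)
  rw [le_div_iff₀ ha]
  linarith [hfg t]

namespace InnerLoop

variable (k₁ k₂ γ ε : ℝ)

def energy (x w z : ℝ) : ℝ := γ * (x ^ 2 + w ^ 2) + z ^ 2

def lyapunov (x w z : ℝ) : ℝ := energy γ x w z - 2 * ε * γ * w * z

/-- The derivative of `lyapunov` along the vector field `(-k₁ x + w, -x - k₂ w + z, -γ w)`. -/
def lyapunovDeriv (x w z : ℝ) : ℝ :=
  -2 * γ * (k₁ * x ^ 2 + (k₂ - ε * γ) * w ^ 2 + ε * z ^ 2 - ε * x * z - ε * k₂ * w * z)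

variable {k₁ k₂ γ ε}

theorem exists_cross_term_weight (hk₁ : 0 < k₁) (hk₂ : 0 < k₂) :
    ∃ ε > 0, 4 * γ * ε ^ 2 ≤ 1 ∧ 4 * γ * ε ≤ k₂ ∧ (1 + 2 * k₁ * k₂) * ε ≤ k₁ := by
  have small : ∀ᶠ ε in 𝓝 (0 : ℝ),
      4 * γ * ε ^ 2 < 1 ∧ 4 * γ * ε < k₂ ∧ (1 + 2 * k₁ * k₂) * ε < k₁ := by
    refine ContinuousAt.eventually_lt (by fun_prop) (by fun_prop) (by simp) |>.and <|
      ContinuousAt.eventually_lt (by fun_prop) (by fun_prop) (by simpa using hk₂) |>.and <|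
      ContinuousAt.eventually_lt (by fun_prop) (by fun_prop) (by simpa using hk₁)
  have small_pos : ∀ᶠ ε in 𝓝[>] (0 : ℝ), _ :=
    (small.filter_mono nhdsWithin_le_nhds).and self_mem_nhdsWithin
  obtain ⟨ε, ⟨h₁, h₂, h₃⟩, hε⟩ := small_pos.exists
  exact ⟨ε, hε, h₁.le, h₂.le, h₃.le⟩

theorem energy_nonneg (hγ : 0 < γ) (x w z : ℝ) : 0 ≤ energy γ x w z := by
  unfold energy; positivity

theorem energy_le_two_mul_lyapunov (hγ : 0 < γ) (hε : 4 * γ * ε ^ 2 ≤ 1) (x w z : ℝ) :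
    energy γ x w z ≤ 2 * lyapunov γ ε x w z := by
  unfold lyapunov energy
  nlinarith [mul_nonneg hγ.le (sq_nonneg x), mul_nonneg hγ.le (sq_nonneg (w - 2 * ε * z)),
    mul_nonneg (sub_nonneg.2 hε) (sq_nonneg z)]

theorem lyapunov_le_two_mul_energy (hγ : 0 < γ) (hε : 4 * γ * ε ^ 2 ≤ 1) (x w z : ℝ) :
    lyapunov γ ε x w z ≤ 2 * energy γ x w z := by
  unfold lyapunov energy
  nlinarith [mul_nonneg hγ.le (sq_nonneg x), mul_nonneg hγ.le (sq_nonneg (w + ε * z)),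
    mul_nonneg (sub_nonneg.2 hε) (sq_nonneg z)]

theorem lyapunovDeriv_le_neg_mul_energy (hk₁ : 0 < k₁) (hk₂ : 0 < k₂) (hγ : 0 < γ) (hε : 0 < ε)
    (hεk₂ : 4 * γ * ε ≤ k₂) (hεk₁ : (1 + 2 * k₁ * k₂) * ε ≤ k₁) (x w z : ℝ) :
    lyapunovDeriv k₁ k₂ γ ε x w z ≤ -min (min k₁ k₂) (ε * γ) * energy γ x w z := by
  set c := min (min k₁ k₂) (ε * γ)
  have dissipation : k₁ * x ^ 2 + k₂ * w ^ 2 + ε * z ^ 2 ≤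
      2 * (k₁ * x ^ 2 + (k₂ - ε * γ) * w ^ 2 + ε * z ^ 2 - ε * x * z - ε * k₂ * w * z) := by
    nlinarith [sq_nonneg (k₁ * x - ε * z),
      mul_nonneg (mul_pos hk₁ hk₂).le (sq_nonneg (w - 2 * ε * z)),
      mul_nonneg (mul_nonneg hk₁.le (sub_nonneg.2 hεk₂)) (sq_nonneg w),
      mul_nonneg (mul_nonneg hε.le (sub_nonneg.2 hεk₁)) (sq_nonneg z)]
  have comparison : c * energy γ x w z ≤ γ * (k₁ * x ^ 2 + k₂ * w ^ 2 + ε * z ^ 2) := by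
    have hc₁ : c ≤ k₁ := (min_le_left _ _).trans (min_le_left _ _)
    have hc₂ : c ≤ k₂ := (min_le_left _ _).trans (min_le_right _ _)
    have hc₃ : c ≤ ε * γ := min_le_right _ _
    unfold energy
    nlinarith [mul_le_mul_of_nonneg_right hc₁ (mul_nonneg hγ.le (sq_nonneg x)),
      mul_le_mul_of_nonneg_right hc₂ (mul_nonneg hγ.le (sq_nonneg w)),
      mul_le_mul_of_nonneg_right hc₃ (sq_nonneg z)]
  unfold lyapunovDeriv
  linarith [mul_le_mul_of_nonneg_left dissipation hγ.le]

theorem hasDerivAt_lyapunov {x w z : ℝ → ℝ} {t : ℝ}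
    (hx : HasDerivAt x (-k₁ * x t + w t) t) (hw : HasDerivAt w (-x t - k₂ * w t + z t) t)
    (hz : HasDerivAt z (-γ * w t) t) :
    HasDerivAt (fun s => lyapunov γ ε (x s) (w s) (z s))
      (lyapunovDeriv k₁ k₂ γ ε (x t) (w t) (z t)) t := by
  unfold lyapunov energy lyapunovDeriv
  refine ((((hx.pow 2).add (hw.pow 2)).const_mul γ).add (hz.pow 2) |>.sub
    ((hw.const_mul (2 * ε * γ)).mul hz)).congr_deriv ?_
  push_cast
  ring

theorem tendsto_zero_of_hasDerivAt {x w z : ℝ → ℝ} (hk₁ : 0 < k₁) (hk₂ : 0 < k₂) (hγ : 0 < γ)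
    (hx : ∀ t, HasDerivAt x (-k₁ * x t + w t) t)
    (hw : ∀ t, HasDerivAt w (-x t - k₂ * w t + z t) t) (hz : ∀ t, HasDerivAt z (-γ * w t) t) :
    Tendsto x atTop (𝓝 0) ∧ Tendsto w atTop (𝓝 0) ∧ Tendsto z atTop (𝓝 0) := by
  obtain ⟨ε, hε, hεγ, hεk₂, hεk₁⟩ := exists_cross_term_weight hk₁ hk₂
  set c := min (min k₁ k₂) (ε * γ)
  have hc : 0 < c := lt_min (lt_min hk₁ hk₂) (mul_pos hε hγ)
  have lyapunov_decay : Tendsto (fun t => lyapunov γ ε (x t) (w t) (z t)) atTop (𝓝 0) := by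
    refine tendsto_zero_of_hasDerivAt_le_neg_mul (half_pos hc)
      (fun t => hasDerivAt_lyapunov (hx t) (hw t) (hz t)) (fun t => ?_) (fun t => ?_)
    · nlinarith [lyapunovDeriv_le_neg_mul_energy hk₁ hk₂ hγ hε hεk₂ hεk₁ (x t) (w t) (z t),
        lyapunov_le_two_mul_energy hγ hεγ (x t) (w t) (z t)]
    · linarith [energy_nonneg hγ (x t) (w t) (z t),
        energy_le_two_mul_lyapunov hγ hεγ (x t) (w t) (z t)]
  have energy_decay : Tendsto (fun t => energy γ (x t) (w t) (z t)) atTop (𝓝 0) :=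
    squeeze_zero (fun _ => energy_nonneg hγ _ _ _)
      (fun _ => energy_le_two_mul_lyapunov hγ hεγ _ _ _) (by simpa using lyapunov_decay.const_mul 2)
  refine ⟨tendsto_nhds_zero_of_mul_sq_le hγ (fun t => ?_) energy_decay,
    tendsto_nhds_zero_of_mul_sq_le hγ (fun t => ?_) energy_decay,
    tendsto_nhds_zero_of_mul_sq_le one_pos (fun t => ?_) energy_decay⟩ <;>
  · unfold energy; nlinarith [sq_nonneg (x t), sq_nonneg (w t), sq_nonneg (z t)]

end InnerLoop

theorem inner_loop_global_asymptotic_stability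
    (k₁ k₂ γ : ℝ) (hk₁ : 0 < k₁) (hk₂ : 0 < k₂) (hγ : 0 < γ)
    (ξ₁ ξ₂ d : ℝ → ℝ)
    (hξ₁ : ∀ t, HasDerivAt ξ₁ (ξ₂ t) t)
    (hξ₂ : ∀ t, HasDerivAt ξ₂ (-(1 + k₁ * k₂) * ξ₁ t - (k₁ + k₂) * ξ₂ t + d t) t)
    (hd : ∀ t, HasDerivAt d (-γ * (k₁ * ξ₁ t + ξ₂ t)) t) :
    Tendsto ξ₁ atTop (nhds 0) ∧ Tendsto ξ₂ atTop (nhds 0) ∧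
      Tendsto d atTop (nhds 0) := by
  set w := fun t => ξ₂ t + k₁ * ξ₁ t
  obtain ⟨hξ₁₀, hw₀, hd₀⟩ := InnerLoop.tendsto_zero_of_hasDerivAt (w := w) hk₁ hk₂ hγ
    (fun t => (hξ₁ t).congr_deriv (by ring))
    (fun t => ((hξ₂ t).add ((hξ₁ t).const_mul k₁)).congr_deriv (by ring))
    (fun t => (hd t).congr_deriv (by ring))
  refine ⟨hξ₁₀, ?_, hd₀⟩
  simpa [w] using hw₀.sub (hξ₁₀.const_mul k₁)
end

section
/- Let k₁, k₂, γ be real numbers with k₁ > 0, k₂ > 0, γ > 0. Then every complex root z of the polynomial X³ + (k₁ + k₂)·X² + (1 + k₁·k₂ + γ)·X + γ·k₁ satisfies Re z < 0. -/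
open Polynomial

theorem inner_adaptive_closedloop_charpoly_hurwitz
    (k₁ k₂ γ : ℝ) (hk₁ : 0 < k₁) (hk₂ : 0 < k₂) (hγ : 0 < γ) :
    ∀ z : ℂ, (X ^ 3 + C ((k₁ : ℂ) + k₂) * X ^ 2
        + C (1 + (k₁ : ℂ) * k₂ + γ) * X + C ((γ : ℂ) * k₁)).IsRoot z →
      z.re < 0 := by
  intro z hz
  by_contra h
  push_neg at h
  have hz' : z^3 + ((k₁:ℂ)+k₂)*z^2 + (1+(k₁:ℂ)*k₂+γ)*z + (γ:ℂ)*k₁ = 0 := by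
    simpa [Polynomial.IsRoot] using hz
  have hre := congrArg Complex.re hz'
  have him := congrArg Complex.im hz'
  simp [pow_succ, Complex.add_re, Complex.add_im, Complex.mul_re, Complex.mul_im,
    Complex.ofReal_re, Complex.ofReal_im, Complex.one_re, Complex.one_im] at hre him
  rcases eq_or_ne z.im 0 with hy0 | hy0
  · rw [hy0] at hre
    nlinarith [mul_pos hγ hk₁, mul_pos hk₁ hk₂, sq_nonneg z.re, h,
      mul_nonneg (mul_nonneg h h) h]
  · have factored : z.im * (3*z.re^2 - z.im^2 + 2*(k₁+k₂)*z.re + (1+k₁*k₂+γ)) = 0 := by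
      linear_combination him
    have key : 3*z.re^2 - z.im^2 + 2*(k₁+k₂)*z.re + (1+k₁*k₂+γ) = 0 :=
      (mul_eq_zero.1 factored).resolve_left hy0
    have reduced : γ*k₁ = 8*z.re^3 + 8*(k₁+k₂)*z.re^2
        + (2*(1+k₁*k₂+γ) + 2*(k₁+k₂)^2)*z.re + (k₁+k₂)*(1+k₁*k₂+γ) := by
      linear_combination hre - (3*z.re + (k₁+k₂)) * key
    nlinarith [mul_pos hγ hk₂, mul_pos hk₁ hk₂, sq_nonneg z.re, h,
      mul_nonneg (mul_nonneg h h) h, mul_nonneg h (sq_nonneg (k₁+k₂)),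
      mul_nonneg h (mul_pos hk₁ hk₂).le, mul_nonneg h hγ.le,
      mul_pos (add_pos hk₁ hk₂) (mul_pos hk₁ hk₂), add_pos hk₁ hk₂,
      mul_nonneg h (add_pos hk₁ hk₂).le]
end

section
/- Let k_z, k_ż, k_i be real numbers with k_z > 0, k_ż > 0, k_i > 0, and k_z·k_ż > k_i. Let w : ℝ → ℝ be a continuous function with w(t) → 0 as t → ∞, and let e₁, e₂, e₃ : ℝ → ℝ satisfy, for every t: e₁'(t) = e₂(t), e₂'(t) = −k_z·e₁(t) − k_ż·e₂(t) − k_i·e₃(t) + w(t), and e₃'(t) = e₁(t) (derivatives in the sense of HasDerivAt). Then e₁(t) → 0, e₂(t) → 0, and e₃(t) → 0 as t → ∞. -/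
/-!
Over `ℂ` the characteristic polynomial `s³ + k_ż s² + k_z s + k_i` factors as
`(s - μ₁)(s - μ₂)(s - μ₃)` with all `Re μᵢ < 0`: the Routh–Hurwitz conditions give a real root
in `(-k_ż, 0)`, and the quadratic cofactor then has positive coefficients. In the coordinates
`e₃`, `e₁ - μ₁ e₃`, `e₂ - μ₁ e₁ - μ₂ (e₁ - μ₁ e₃)` the error dynamics become a cascade of scalar
equations `x' = μ x + g` driven by `w`. Each of these is input-to-state stable: Young's inequality
gives `(‖x‖²)' ≤ Re μ ‖x‖² + ‖g‖² / (-Re μ)`, and Grönwall's inequality turns this into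
`‖x‖² → 0` once `g → 0`.
-/

open Filter Topology

theorem tendsto_gronwallBound_of_neg {K : ℝ} (hK : K < 0) (δ ε : ℝ) :
    Tendsto (gronwallBound δ K ε) atTop (𝓝 (-ε / K)) := by
  rw [gronwallBound_of_K_ne_0 hK.ne]
  have hexp : Tendsto (fun x => Real.exp (K * x)) atTop (𝓝 0) :=
    Real.tendsto_exp_atBot.comp (tendsto_id.const_mul_atTop_of_neg hK)
  convert (hexp.const_mul δ).add ((hexp.sub_const 1).const_mul (ε / K)) using 2
  ring

theorem tendsto_zero_of_hasDerivAt_le_mul_add {f f' h : ℝ → ℝ} {K : ℝ} (hK : K < 0)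
    (hf : ∀ t, HasDerivAt f (f' t) t) (hf_nonneg : ∀ t, 0 ≤ f t)
    (hbound : ∀ t, f' t ≤ K * f t + h t) (hh : Tendsto h atTop (𝓝 0)) :
    Tendsto f atTop (𝓝 0) := by
  refine tendsto_order.2 ⟨fun a ha => Eventually.of_forall fun t => ha.trans_le (hf_nonneg t),
    fun ε hε => ?_⟩
  have hη : 0 < -K * ε / 2 := by nlinarith
  obtain ⟨T, hT⟩ := (hh.eventually (eventually_le_nhds hη)).exists_forall_of_atTop
  have hgronwall : ∀ t ≥ T, f t ≤ gronwallBound (f T) K (-K * ε / 2) (t - T) := fun t ht =>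
    le_gronwallBound_of_liminf_deriv_right_le
      (continuous_iff_continuousAt.2 fun t => (hf t).continuousAt).continuousOn
      (fun s _ r hr => (hf s).hasDerivWithinAt.liminf_right_slope_le hr) le_rfl
      (fun s hs => (hbound s).trans (by linarith [hT s hs.1])) t ⟨ht, le_rfl⟩
  have hshift : Tendsto (fun t : ℝ => t - T) atTop atTop := by
    simpa only [sub_eq_add_neg, id] using tendsto_atTop_add_const_right atTop (-T) tendsto_id
  have hlim := (tendsto_gronwallBound_of_neg hK (f T) (-K * ε / 2)).comp hshift
  rw [show -(-K * ε / 2) / K = ε / 2 by field_simp [hK.ne]] at hlim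
  filter_upwards [hlim.eventually (eventually_lt_nhds (half_lt_self hε)), eventually_ge_atTop T]
    with t hlt hle using (hgronwall t hle).trans_lt hlt

theorem two_mul_inner_mul_add_le {l : ℂ} (hl : l.re < 0) (z w : ℂ) :
    2 * inner ℝ z (l * z + w) ≤ l.re * ‖z‖ ^ 2 + ‖w‖ ^ 2 / -l.re := by
  have hrot : inner ℝ z (l * z) = l.re * ‖z‖ ^ 2 := by
    rw [Complex.inner, Complex.sq_norm, Complex.normSq_apply]
    simp only [Complex.mul_re, Complex.mul_im, Complex.conj_re, Complex.conj_im]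
    ring
  have hcs : inner ℝ z w ≤ ‖z‖ * ‖w‖ := real_inner_le_norm z w
  have hamgm : 2 * (‖z‖ * ‖w‖) ≤ -l.re * ‖z‖ ^ 2 + ‖w‖ ^ 2 / -l.re := by
    have ha : 0 < -l.re := neg_pos.2 hl
    rw [← sub_nonneg]
    have : -l.re * ‖z‖ ^ 2 + ‖w‖ ^ 2 / -l.re - 2 * (‖z‖ * ‖w‖)
        = (-l.re * ‖z‖ - ‖w‖) ^ 2 / -l.re := by
      field_simp [hl.ne]
      ring
    rw [this]
    positivity
  rw [inner_add_right, hrot]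
  linarith

theorem tendsto_zero_of_hasDerivAt_eq_mul_add {l : ℂ} (hl : l.re < 0) {x g : ℝ → ℂ}
    (hx : ∀ t, HasDerivAt x (l * x t + g t) t) (hg : Tendsto g atTop (𝓝 0)) :
    Tendsto x atTop (𝓝 0) := by
  have hg_sq : Tendsto (fun t => ‖g t‖ ^ 2 / -l.re) atTop (𝓝 0) := by
    simpa using (hg.norm.pow 2).div_const (-l.re)
  have hx_sq : Tendsto (fun t => ‖x t‖ ^ 2) atTop (𝓝 0) :=
    tendsto_zero_of_hasDerivAt_le_mul_add hl (fun t => (hx t).norm_sq) (fun t => sq_nonneg _)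
      (fun t => two_mul_inner_mul_add_le hl _ _) hg_sq
  rw [tendsto_zero_iff_norm_tendsto_zero]
  simpa [Real.sqrt_sq (norm_nonneg _)] using hx_sq.sqrt

/-- The hypotheses on `kz kdz ki` say `s³ + kdz s² + kz s + ki = (s - μ₁)(s - μ₂)(s - μ₃)`. -/
theorem tendsto_zero_of_companion_system {kz kdz ki μ₁ μ₂ μ₃ : ℂ}
    (h₁ : μ₁.re < 0) (h₂ : μ₂.re < 0) (h₃ : μ₃.re < 0) (hsum : μ₁ + μ₂ + μ₃ = -kdz)
    (hpair : μ₁ * μ₂ + μ₁ * μ₃ + μ₂ * μ₃ = kz) (hprod : μ₁ * μ₂ * μ₃ = -ki)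
    {w e₁ e₂ e₃ : ℝ → ℂ} (hw : Tendsto w atTop (𝓝 0))
    (he₁ : ∀ t, HasDerivAt e₁ (e₂ t) t)
    (he₂ : ∀ t, HasDerivAt e₂ (-kz * e₁ t - kdz * e₂ t - ki * e₃ t + w t) t)
    (he₃ : ∀ t, HasDerivAt e₃ (e₁ t) t) :
    Tendsto e₁ atTop (𝓝 0) ∧ Tendsto e₂ atTop (𝓝 0) ∧ Tendsto e₃ atTop (𝓝 0) := by
  set v₁ : ℝ → ℂ := fun t => e₁ t - μ₁ * e₃ t with hv₁_def
  set v₂ : ℝ → ℂ := fun t => e₂ t - μ₁ * e₁ t - μ₂ * v₁ t with hv₂_def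
  have he₃' : ∀ t, HasDerivAt e₃ (μ₁ * e₃ t + v₁ t) t := fun t =>
    (he₃ t).congr_deriv (by simp only [hv₁_def]; ring)
  have hv₁_deriv : ∀ t, HasDerivAt v₁ (e₂ t - μ₁ * e₁ t) t := fun t =>
    (he₁ t).sub ((he₃ t).const_mul μ₁)
  have hv₁' : ∀ t, HasDerivAt v₁ (μ₂ * v₁ t + v₂ t) t := fun t =>
    (hv₁_deriv t).congr_deriv (by simp only [hv₂_def]; ring)
  have hv₂' : ∀ t, HasDerivAt v₂ (μ₃ * v₂ t + w t) t := fun t =>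
    (((he₂ t).sub ((he₁ t).const_mul μ₁)).sub ((hv₁_deriv t).const_mul μ₂)).congr_deriv (by
      simp only [hv₂_def, hv₁_def]
      linear_combination (-e₂ t) * hsum + e₁ t * hpair - e₃ t * hprod)
  have hv₂0 := tendsto_zero_of_hasDerivAt_eq_mul_add h₃ hv₂' hw
  have hv₁0 := tendsto_zero_of_hasDerivAt_eq_mul_add h₂ hv₁' hv₂0
  have he₃0 := tendsto_zero_of_hasDerivAt_eq_mul_add h₁ he₃' hv₁0
  have he₁0 : Tendsto e₁ atTop (𝓝 0) := by
    simpa using (hv₁0.add (he₃0.const_mul μ₁)).congr fun t => by simp only [hv₁_def]; ring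
  have he₂0 : Tendsto e₂ atTop (𝓝 0) := by
    simpa using ((hv₂0.add (he₁0.const_mul μ₁)).add (hv₁0.const_mul μ₂)).congr fun t => by
      simp only [hv₂_def]; ring
  exact ⟨he₁0, he₂0, he₃0⟩

theorem Complex.re_neg_of_sq_add_mul_add_eq_zero {p q : ℝ} (hp : 0 < p) (hq : 0 < q) {z : ℂ}
    (hz : z ^ 2 + p * z + q = 0) : z.re < 0 := by
  have hre := congrArg Complex.re hz
  have him := congrArg Complex.im hz
  simp only [sq, Complex.add_re, Complex.add_im, Complex.mul_re, Complex.mul_im,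
    Complex.ofReal_re, Complex.ofReal_im, Complex.zero_re, Complex.zero_im] at hre him
  by_contra! hz_re
  have hz_im : z.im = 0 := by
    have : z.im * (2 * z.re + p) = 0 := by linarith
    exact (mul_eq_zero.1 this).resolve_right (by linarith)
  rw [hz_im] at hre
  nlinarith

theorem exists_add_eq_and_mul_eq {K : Type*} [Field K] [IsAlgClosed K] [NeZero (2 : K)]
    (p q : K) : ∃ μ₁ μ₂ : K, μ₁ + μ₂ = p ∧ μ₁ * μ₂ = q := by
  obtain ⟨s, hs⟩ := IsAlgClosed.exists_eq_mul_self (p ^ 2 - 4 * q)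
  have h2 : (2 : K) ≠ 0 := two_ne_zero
  refine ⟨(p + s) / 2, (p - s) / 2, by field_simp; ring, ?_⟩
  field_simp
  linear_combination hs

theorem exists_cubic_root_mem_Ioo {a b c : ℝ} (ha : 0 < a) (hc : 0 < c) (habc : c < a * b) :
    ∃ r ∈ Set.Ioo (-a) 0, r ^ 3 + a * r ^ 2 + b * r + c = 0 := by
  have hcont : ContinuousOn (fun r : ℝ => r ^ 3 + a * r ^ 2 + b * r + c) (Set.Icc (-a) 0) := by
    fun_prop
  have hsign : (0 : ℝ) ∈
      Set.Ioo ((-a) ^ 3 + a * (-a) ^ 2 + b * -a + c) (0 ^ 3 + a * 0 ^ 2 + b * 0 + c) :=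
    ⟨by nlinarith, by simpa using hc⟩
  exact intermediate_value_Ioo (by linarith) hcont hsign

theorem exists_vieta_re_neg_of_routhHurwitz {a b c : ℝ} (ha : 0 < a) (hc : 0 < c)
    (habc : c < a * b) :
    ∃ μ₁ μ₂ μ₃ : ℂ, μ₁.re < 0 ∧ μ₂.re < 0 ∧ μ₃.re < 0 ∧ μ₁ + μ₂ + μ₃ = -a ∧
      μ₁ * μ₂ + μ₁ * μ₃ + μ₂ * μ₃ = b ∧ μ₁ * μ₂ * μ₃ = -c := by
  obtain ⟨r, ⟨hr_gt, hr_lt⟩, hr⟩ := exists_cubic_root_mem_Ioo ha hc habc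
  have hp : 0 < a + r := by linarith
  -- `r * (r ^ 2 + a * r + b) = -c` with `r < 0`
  have hq : 0 < r ^ 2 + a * r + b := by nlinarith
  obtain ⟨μ₁, μ₂, hsum, hprod⟩ :=
    exists_add_eq_and_mul_eq (-((a + r : ℝ) : ℂ)) ((r ^ 2 + a * r + b : ℝ) : ℂ)
  have hroot₁ : μ₁ ^ 2 + ((a + r : ℝ) : ℂ) * μ₁ + ((r ^ 2 + a * r + b : ℝ) : ℂ) = 0 := by
    linear_combination μ₁ * hsum - hprod
  have hroot₂ : μ₂ ^ 2 + ((a + r : ℝ) : ℂ) * μ₂ + ((r ^ 2 + a * r + b : ℝ) : ℂ) = 0 := by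
    linear_combination μ₂ * hsum - hprod
  have hrC : (r : ℂ) ^ 3 + a * r ^ 2 + b * r + c = 0 := by exact_mod_cast hr
  push_cast at hsum hprod
  refine ⟨μ₁, μ₂, r, Complex.re_neg_of_sq_add_mul_add_eq_zero hp hq hroot₁,
    Complex.re_neg_of_sq_add_mul_add_eq_zero hp hq hroot₂, by simpa using hr_lt,
    by linear_combination hsum, by linear_combination hprod + r * hsum,
    by linear_combination r * hprod + hrC⟩

theorem outer_loop_convergence_general
    (kz kdz ki : ℝ) (hkdz : 0 < kdz) (hki : 0 < ki)
    (hrh : ki < kz * kdz)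
    (w : ℝ → ℝ) (hw : Tendsto w atTop (nhds 0))
    (e₁ e₂ e₃ : ℝ → ℝ)
    (he₁ : ∀ t, HasDerivAt e₁ (e₂ t) t)
    (he₂ : ∀ t, HasDerivAt e₂ (-kz * e₁ t - kdz * e₂ t - ki * e₃ t + w t) t)
    (he₃ : ∀ t, HasDerivAt e₃ (e₁ t) t) :
    Tendsto e₁ atTop (nhds 0) ∧ Tendsto e₂ atTop (nhds 0) ∧
      Tendsto e₃ atTop (nhds 0) := by
  obtain ⟨μ₁, μ₂, μ₃, h₁, h₂, h₃, hsum, hpair, hprod⟩ :=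
    exists_vieta_re_neg_of_routhHurwitz hkdz hki (by rwa [mul_comm])
  have hwC : Tendsto (fun t => (w t : ℂ)) atTop (𝓝 0) := by
    simpa using tendsto_ofReal_iff.2 hw
  have he₂C : ∀ t, HasDerivAt (fun t => (e₂ t : ℂ))
      (-kz * e₁ t - kdz * e₂ t - ki * e₃ t + w t) t := fun t => by
    simpa using (he₂ t).ofReal_comp
  obtain ⟨h₁0, h₂0, h₃0⟩ := tendsto_zero_of_companion_system h₁ h₂ h₃ hsum hpair hprod hwC
    (fun t => (he₁ t).ofReal_comp) he₂C (fun t => (he₃ t).ofReal_comp)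
  simp only [← Complex.ofReal_zero, tendsto_ofReal_iff] at h₁0 h₂0 h₃0
  exact ⟨h₁0, h₂0, h₃0⟩

theorem outer_loop_convergence
    (kz kdz ki : ℝ) (hkz : 0 < kz) (hkdz : 0 < kdz) (hki : 0 < ki)
    (hrh : ki < kz * kdz)
    (w : ℝ → ℝ) (hw_cont : Continuous w) (hw : Tendsto w atTop (nhds 0))
    (e₁ e₂ e₃ : ℝ → ℝ)
    (he₁ : ∀ t, HasDerivAt e₁ (e₂ t) t)
    (he₂ : ∀ t, HasDerivAt e₂ (-kz * e₁ t - kdz * e₂ t - ki * e₃ t + w t) t)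
    (he₃ : ∀ t, HasDerivAt e₃ (e₁ t) t) :
    Tendsto e₁ atTop (nhds 0) ∧ Tendsto e₂ atTop (nhds 0) ∧
      Tendsto e₃ atTop (nhds 0) :=
  outer_loop_convergence_general kz kdz ki hkdz hki hrh w hw e₁ e₂ e₃ he₁ he₂ he₃
end

section
/- Let k_z, k_ż, k_i, C be real numbers with k_z > 0, k_ż > 0, k_i > 0, k_z·k_ż > k_i, and C ≥ 0. Let w : ℝ → ℝ be a continuous function with |w(t)| ≤ C for all t, and let e₁, e₂, e₃ : ℝ → ℝ satisfy, for every t: e₁'(t) = e₂(t), e₂'(t) = −k_z·e₁(t) − k_ż·e₂(t) − k_i·e₃(t) + w(t), and e₃'(t) = e₁(t) (derivatives in the sense of HasDerivAt). Then there exists M ∈ ℝ such that |e₁(t)| ≤ M, |e₂(t)| ≤ M, and |e₃(t)| ≤ M for all t ≥ 0. -/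
/-!
In the coordinates `x = e₃`, `y = e₁`, `u = e₂ + k_ż e₁` the system reads `x' = y`,
`y' = u - k_ż y`, `u' = -k_z y - k_i x + w`. The energy
`V₀ = u²/2 + k_i x y + k_z y²/2 + k_ż k_i x²/2` is positive definite because
`k_i < k_z k_ż`, and `V₀' = -(k_z k_ż - k_i) y² + u w`. Adding a small cross term `ε (x - y) u`
makes the decay strict in all three coordinates, so `V' ≤ -σ V + K` for the bounded disturbance,
and a comparison argument bounds `V`, hence the state, on `[0, ∞)`.
-/

open Filter Topology

theorem le_max_of_hasDerivAt_le_neg_mul_add {V V' : ℝ → ℝ} {σ K t : ℝ} (hσ : 0 < σ)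
    (hV : ∀ s, HasDerivAt V (V' s) s) (hV' : ∀ s, V' s ≤ -σ * V s + K) (ht : 0 ≤ t) :
    V t ≤ max (V 0) (K / σ) := by
  have hderiv : ∀ s, HasDerivAt (fun s => (V s - K / σ) * Real.exp (σ * s))
      ((V' s + σ * V s - K) * Real.exp (σ * s)) s := fun s => by
    have := ((hV s).sub_const (K / σ)).fun_mul ((hasDerivAt_id' s).const_mul σ).exp
    exact this.congr_deriv (by field_simp; ring)
  have hanti := antitone_of_hasDerivAt_nonpos hderiv fun s =>
    mul_nonpos_of_nonpos_of_nonneg (by linarith [hV' s]) (Real.exp_pos _).le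
  have hle : (V t - K / σ) * Real.exp (σ * t) ≤ V 0 - K / σ := by
    simpa using hanti ht
  have hexp : 1 ≤ Real.exp (σ * t) := Real.one_le_exp (by positivity)
  rcases le_total (V t) (K / σ) with h | h
  · exact h.trans (le_max_right _ _)
  · exact le_max_of_le_left (by nlinarith)

theorem mul_le_half_mul_sq_add_sq_div {δ : ℝ} (hδ : 0 < δ) (a b : ℝ) :
    a * b ≤ δ / 2 * a ^ 2 + b ^ 2 / (2 * δ) := by
  have h : δ / 2 * a ^ 2 + b ^ 2 / (2 * δ) - a * b = (δ * a - b) ^ 2 / (2 * δ) := by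
    field_simp
    ring
  linarith [h ▸ (by positivity : 0 ≤ (δ * a - b) ^ 2 / (2 * δ))]

namespace OuterLoop

variable {kz kdz ki : ℝ}

noncomputable def lyap (kz kdz ki ε x y u : ℝ) : ℝ :=
  u ^ 2 / 2 + ki * x * y + kz / 2 * y ^ 2 + kdz * ki / 2 * x ^ 2 + ε * (x - y) * u

def lyapDeriv (kz kdz ki ε x y u w : ℝ) : ℝ :=
  -(kz * kdz - ki) * y ^ 2 + u * w +
    ε * (-u ^ 2 + (1 + kdz) * y * u - ki * x ^ 2 + (ki - kz) * x * y + kz * y ^ 2 + (x - y) * w)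

theorem hasDerivAt_lyap {ε w t : ℝ} {x y u : ℝ → ℝ} (hx : HasDerivAt x (y t) t)
    (hy : HasDerivAt y (u t - kdz * y t) t) (hu : HasDerivAt u (-kz * y t - ki * x t + w) t) :
    HasDerivAt (fun s => lyap kz kdz ki ε (x s) (y s) (u s))
      (lyapDeriv kz kdz ki ε (x t) (y t) (u t) w) t := by
  have := ((((hu.fun_pow 2).div_const 2).fun_add ((hx.const_mul ki).fun_mul hy)).fun_add
    ((hy.fun_pow 2).const_mul (kz / 2))).fun_add ((hx.fun_pow 2).const_mul (kdz * ki / 2))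
    |>.fun_add (((hx.fun_sub hy).const_mul ε).fun_mul hu)
  exact this.congr_deriv (by simp only [lyapDeriv]; push_cast; ring)

-- `2 (k_ż k_i + k_z) Q - k_i (k_z k_ż - k_i) (x² + y²) = (k_ż k_i x + k_i y)² + (k_i x + k_z y)²`
theorem mul_sq_add_sq_le_quadratic (hkz : 0 < kz) (hkdz : 0 < kdz) (hki : 0 < ki) (x y : ℝ) :
    ki * (kz * kdz - ki) / (2 * (kdz * ki + kz)) * (x ^ 2 + y ^ 2) ≤
      kdz * ki / 2 * x ^ 2 + ki * x * y + kz / 2 * y ^ 2 := by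
  rw [div_mul_eq_mul_div, div_le_iff₀ (by positivity)]
  nlinarith [sq_nonneg (kdz * ki * x + ki * y), sq_nonneg (ki * x + kz * y)]

theorem exists_pos_eventually_mul_le_lyap (hkz : 0 < kz) (hkdz : 0 < kdz) (hki : 0 < ki)
    (hrh : ki < kz * kdz) :
    ∃ m > 0, ∀ᶠ ε in 𝓝[>] 0, ∀ x y u,
      m * (x ^ 2 + y ^ 2 + u ^ 2) ≤ lyap kz kdz ki ε x y u := by
  have hd : 0 < kz * kdz - ki := sub_pos.2 hrh
  set m₀ := min (1 / 2) (ki * (kz * kdz - ki) / (2 * (kdz * ki + kz)))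
  have hm₀ : 0 < m₀ := lt_min (by norm_num) (by positivity)
  refine ⟨m₀ / 2, by positivity, ?_⟩
  filter_upwards [Ioo_mem_nhdsGT (half_pos hm₀)] with ε ⟨hε, hεm⟩ x y u
  have hm₀_le_half : m₀ ≤ 1 / 2 := min_le_left _ _
  have hm₀_le_quad : m₀ ≤ ki * (kz * kdz - ki) / (2 * (kdz * ki + kz)) := min_le_right _ _
  have hq := (mul_le_mul_of_nonneg_right hm₀_le_quad (by positivity)).trans
    (mul_sq_add_sq_le_quadratic hkz hkdz hki x y)
  simp only [lyap]
  nlinarith [mul_nonneg hε.le (sq_nonneg (x + u)), mul_nonneg hε.le (sq_nonneg (y - u)),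
    mul_nonneg (sub_nonneg.2 hm₀_le_half) (sq_nonneg u),
    mul_nonneg (sub_nonneg.2 hεm.le)
      (add_nonneg (add_nonneg (sq_nonneg x) (sq_nonneg y)) (sq_nonneg u))]

theorem lyap_le_mul (hkz : 0 ≤ kz) (hkdz : 0 ≤ kdz) (hki : 0 ≤ ki) {ε : ℝ} (hε : 0 ≤ ε)
    (x y u : ℝ) :
    lyap kz kdz ki ε x y u ≤ (1 + ki + kz + kdz * ki + ε) * (x ^ 2 + y ^ 2 + u ^ 2) := by
  have hs : 0 ≤ x ^ 2 + y ^ 2 + u ^ 2 := by positivity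
  simp only [lyap]
  nlinarith [mul_nonneg hki (sq_nonneg (x - y)), mul_nonneg hε (sq_nonneg (x - u)),
    mul_nonneg hε (sq_nonneg (y + u)), mul_nonneg hki hs, mul_nonneg hkz hs,
    mul_nonneg (mul_nonneg hkdz hki) hs, mul_nonneg hε hs,
    mul_nonneg hkz (add_nonneg (sq_nonneg x) (sq_nonneg u)),
    mul_nonneg (mul_nonneg hkdz hki) (add_nonneg (sq_nonneg y) (sq_nonneg u)),
    mul_nonneg hki (sq_nonneg u), sq_nonneg x, sq_nonneg y]

theorem eventually_lyapDeriv_le (hkz : 0 < kz) (hkdz : 0 < kdz) (hki : 0 < ki)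
    (hrh : ki < kz * kdz) :
    ∀ᶠ ε in 𝓝[>] 0, ∃ c > 0, ∃ K ≥ 0, ∀ x y u w,
      lyapDeriv kz kdz ki ε x y u w ≤ -c * (x ^ 2 + y ^ 2 + u ^ 2) + K * w ^ 2 := by
  have hd : 0 < kz * kdz - ki := sub_pos.2 hrh
  set B := (1 + kdz) ^ 2 * ki + (ki - kz) ^ 2 + 2 * kz * ki
  have hB : 0 < B := by positivity
  filter_upwards [Ioo_mem_nhdsGT (lt_min one_pos (div_pos (mul_pos hd hki) hB))]
    with ε ⟨hε, hεle⟩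
  have hε₁ : ε ≤ 1 := hεle.le.trans (min_le_left _ _)
  have hεB : ε * B ≤ (kz * kdz - ki) * ki :=
    (le_div_iff₀ hB).1 (hεle.le.trans (min_le_right _ _))
  set c := min (min (ε / 2) (ε * ki / 2)) ((kz * kdz - ki) / 2)
  have hc : 0 < c := lt_min (lt_min (by positivity) (by positivity)) (by positivity)
  refine ⟨c / 2, half_pos hc, 3 / (2 * c), by positivity, fun x y u w => ?_⟩
  have hfree : ε * (-u ^ 2 + (1 + kdz) * y * u - ki * x ^ 2 + (ki - kz) * x * y + kz * y ^ 2)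
      ≤ -(ε / 2) * u ^ 2 - (ε * ki / 2) * x ^ 2 + (kz * kdz - ki) / 2 * y ^ 2 := by
    -- `2 k_i` times the gap is `ε k_i (u - (1 + k_ż) y)² + ε (k_i x - (k_i - k_z) y)²`
    -- `+ ((k_z k_ż - k_i) k_i - ε B) y²`, which is where `B` comes from
    refine le_of_mul_le_mul_left ?_ (by positivity : (0 : ℝ) < 2 * ki)
    nlinarith [mul_nonneg (mul_nonneg hki.le hε.le) (sq_nonneg (u - (1 + kdz) * y)),
      mul_nonneg hε.le (sq_nonneg (ki * x - (ki - kz) * y)),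
      mul_nonneg (sub_nonneg.2 hεB) (sq_nonneg y)]
  have hcross :
      (u + ε * (x - y)) * w ≤ c / 2 * (x ^ 2 + y ^ 2 + u ^ 2) + 3 / (2 * c) * w ^ 2 := by
    have hsq : (u + ε * (x - y)) ^ 2 ≤ 3 * (x ^ 2 + y ^ 2 + u ^ 2) := by
      nlinarith [sq_nonneg (u - ε * x), sq_nonneg (u + ε * y), sq_nonneg (ε * x + ε * y),
        mul_le_one₀ hε₁ hε.le hε₁, sq_nonneg x, sq_nonneg y]
    have hyoung :=
      mul_le_half_mul_sq_add_sq_div (by positivity : 0 < c / 3) (u + ε * (x - y)) w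
    have : w ^ 2 / (2 * (c / 3)) = 3 / (2 * c) * w ^ 2 := by field_simp
    nlinarith
  have hc₁ : c ≤ ε / 2 := (min_le_left _ _).trans (min_le_left _ _)
  have hc₂ : c ≤ ε * ki / 2 := (min_le_left _ _).trans (min_le_right _ _)
  have hc₃ : c ≤ (kz * kdz - ki) / 2 := min_le_right _ _
  simp only [lyapDeriv]
  nlinarith [mul_le_mul_of_nonneg_right hc₁ (sq_nonneg u),
    mul_le_mul_of_nonneg_right hc₂ (sq_nonneg x), mul_le_mul_of_nonneg_right hc₃ (sq_nonneg y)]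

theorem exists_bound_sq_add_sq_add_sq (hkz : 0 < kz) (hkdz : 0 < kdz) (hki : 0 < ki)
    (hrh : ki < kz * kdz) {C : ℝ} {x y u w : ℝ → ℝ} (hw : ∀ t, |w t| ≤ C)
    (hx : ∀ t, HasDerivAt x (y t) t) (hy : ∀ t, HasDerivAt y (u t - kdz * y t) t)
    (hu : ∀ t, HasDerivAt u (-kz * y t - ki * x t + w t) t) :
    ∃ B, ∀ t, 0 ≤ t → x t ^ 2 + y t ^ 2 + u t ^ 2 ≤ B := by
  obtain ⟨m, hm, hlower⟩ := exists_pos_eventually_mul_le_lyap hkz hkdz hki hrh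
  obtain ⟨ε, ⟨hlower, c, hc, K, hK, hderiv⟩, hε⟩ :=
    ((hlower.and (eventually_lyapDeriv_le hkz hkdz hki hrh)).and self_mem_nhdsWithin).exists
  set Λ := 1 + ki + kz + kdz * ki + ε
  have hΛ : 0 < Λ := by positivity
  set V := fun t => lyap kz kdz ki ε (x t) (y t) (u t)
  have hV' :
      ∀ t, lyapDeriv kz kdz ki ε (x t) (y t) (u t) (w t) ≤ -(c / Λ) * V t + K * C ^ 2 := by
    intro t
    have hupper := lyap_le_mul hkz.le hkdz.le hki.le (le_of_lt hε) (x t) (y t) (u t)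
    have hwC : w t ^ 2 ≤ C ^ 2 := sq_le_sq' (abs_le.1 (hw t)).1 (abs_le.1 (hw t)).2
    calc lyapDeriv kz kdz ki ε (x t) (y t) (u t) (w t)
        ≤ -c * (x t ^ 2 + y t ^ 2 + u t ^ 2) + K * w t ^ 2 := hderiv _ _ _ _
      _ ≤ -(c / Λ) * V t + K * C ^ 2 := by
        have : c / Λ * V t ≤ c * (x t ^ 2 + y t ^ 2 + u t ^ 2) := by
          rw [div_mul_eq_mul_div, div_le_iff₀ hΛ]; nlinarith
        nlinarith
  refine ⟨max (V 0) (K * C ^ 2 / (c / Λ)) / m, fun t ht => ?_⟩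
  rw [le_div_iff₀ hm, mul_comm]
  exact (hlower _ _ _).trans <| le_max_of_hasDerivAt_le_neg_mul_add (by positivity)
    (fun t => hasDerivAt_lyap (hx t) (hy t) (hu t)) hV' ht

end OuterLoop

open OuterLoop in
theorem outer_loop_iss_boundedness_general
    (kz kdz ki C : ℝ) (hkz : 0 < kz) (hkdz : 0 < kdz) (hki : 0 < ki)
    (hrh : ki < kz * kdz)
    (w : ℝ → ℝ) (hw : ∀ t, |w t| ≤ C)
    (e₁ e₂ e₃ : ℝ → ℝ)
    (he₁ : ∀ t, HasDerivAt e₁ (e₂ t) t)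
    (he₂ : ∀ t, HasDerivAt e₂ (-kz * e₁ t - kdz * e₂ t - ki * e₃ t + w t) t)
    (he₃ : ∀ t, HasDerivAt e₃ (e₁ t) t) :
    ∃ M : ℝ, ∀ t, 0 ≤ t → |e₁ t| ≤ M ∧ |e₂ t| ≤ M ∧ |e₃ t| ≤ M := by
  obtain ⟨B, hB⟩ := exists_bound_sq_add_sq_add_sq hkz hkdz hki hrh hw he₃
    (fun t => (he₁ t).congr_deriv (by ring))
    (fun t => ((he₂ t).fun_add ((he₁ t).const_mul kdz)).congr_deriv (by ring))
  refine ⟨(1 + kdz) * √B, fun t ht => ?_⟩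
  have hB := hB t ht
  have h₁ : |e₁ t| ≤ √B := Real.abs_le_sqrt (by nlinarith)
  have h₃ : |e₃ t| ≤ √B := Real.abs_le_sqrt (by nlinarith)
  have hu : |e₂ t + kdz * e₁ t| ≤ √B := Real.abs_le_sqrt (by nlinarith)
  have hsqrt : √B ≤ (1 + kdz) * √B := le_mul_of_one_le_left (Real.sqrt_nonneg B) (by linarith)
  refine ⟨h₁.trans hsqrt, ?_, h₃.trans hsqrt⟩
  calc |e₂ t| = |(e₂ t + kdz * e₁ t) - kdz * e₁ t| := by ring_nf
    _ ≤ |e₂ t + kdz * e₁ t| + |kdz * e₁ t| := abs_sub _ _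
    _ = |e₂ t + kdz * e₁ t| + kdz * |e₁ t| := by rw [abs_mul, abs_of_pos hkdz]
    _ ≤ (1 + kdz) * √B := by nlinarith

theorem outer_loop_iss_boundedness
    (kz kdz ki C : ℝ) (hkz : 0 < kz) (hkdz : 0 < kdz) (hki : 0 < ki)
    (hrh : ki < kz * kdz) (hC : 0 ≤ C)
    (w : ℝ → ℝ) (hw_cont : Continuous w) (hw : ∀ t, |w t| ≤ C)
    (e₁ e₂ e₃ : ℝ → ℝ)
    (he₁ : ∀ t, HasDerivAt e₁ (e₂ t) t)
    (he₂ : ∀ t, HasDerivAt e₂ (-kz * e₁ t - kdz * e₂ t - ki * e₃ t + w t) t)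
    (he₃ : ∀ t, HasDerivAt e₃ (e₁ t) t) :
    ∃ M : ℝ, ∀ t, 0 ≤ t → |e₁ t| ≤ M ∧ |e₂ t| ≤ M ∧ |e₃ t| ≤ M :=
  outer_loop_iss_boundedness_general kz kdz ki C hkz hkdz hki hrh w hw e₁ e₂ e₃ he₁ he₂ he₃
end

section
/- Let m, γ, k₁, k₂ be real numbers with m > 0, γ > 0, k₁ > 0, k₂ > 0, let f be a real constant, and let e, v, f̂ : ℝ → ℝ be functions such that for every t: e has derivative v(t) at t, v has derivative −(1 + k₁k₂)·e(t) − (k₁ + k₂)·v(t) + (f − f̂(t))/m at t, and f̂ has derivative γ·m·(k₁·e(t) + v(t)) at t. Then e(t) → 0, v(t) → 0, and f̂(t) → f as t → ∞. -/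
/-!
In the coordinates `s = v + k₁ e` and `φ = (f - f̂) / m` the closed loop is the linear system
`e' = s - k₁ e`, `s' = -e - k₂ s + φ`, `φ' = -γ s`. The energy `e² + s² + φ² / γ` decreases at
the rate `2 k₁ e² + 2 k₂ s²`, which does not see `φ`; adding the cross term `-α s φ` for a small
`α > 0` gives a function `W` comparable to the energy with `W' ≤ -c W`. So `W`, and with it `e`,
`s` and `φ`, decays exponentially.
-/

open Filter Topology Real

theorem antitone_mul_exp_of_hasDerivAt_le {W W' : ℝ → ℝ} {c : ℝ}
    (hW : ∀ t, HasDerivAt W (W' t) t) (hdecay : ∀ t, W' t ≤ -c * W t) :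
    Antitone fun t => W t * exp (c * t) := by
  have hderiv : ∀ t, HasDerivAt (fun t => W t * exp (c * t))
      ((W' t + c * W t) * exp (c * t)) t := fun t =>
    ((hW t).fun_mul ((hasDerivAt_id' t).const_mul c).exp).congr_deriv (by ring)
  refine antitone_of_deriv_nonpos (fun t => (hderiv t).differentiableAt) fun t => ?_
  rw [(hderiv t).deriv]
  exact mul_nonpos_of_nonpos_of_nonneg (by linarith [hdecay t]) (exp_pos _).le

theorem tendsto_zero_of_hasDerivAt_le_neg_mul_s17 {W W' : ℝ → ℝ} {c : ℝ} (hc : 0 < c)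
    (hW_nonneg : ∀ t, 0 ≤ W t) (hW : ∀ t, HasDerivAt W (W' t) t)
    (hdecay : ∀ t, W' t ≤ -c * W t) : Tendsto W atTop (𝓝 0) := by
  have hbound : ∀ t, 0 ≤ t → W t ≤ W 0 * exp (-c * t) := fun t ht => by
    have h := antitone_mul_exp_of_hasDerivAt_le hW hdecay ht
    simp only [mul_zero, exp_zero, mul_one] at h
    calc W t = W t * exp (c * t) * exp (-c * t) := by
          rw [mul_assoc, ← exp_add]; simp
      _ ≤ W 0 * exp (-c * t) := by gcongr
  have hexp : Tendsto (fun t => W 0 * exp (-c * t)) atTop (𝓝 0) := by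
    simpa using (tendsto_exp_atBot.comp
      (tendsto_id.const_mul_atTop_of_neg (neg_neg_of_pos hc))).const_mul (W 0)
  exact tendsto_of_tendsto_of_tendsto_of_le_of_le' tendsto_const_nhds hexp
    (Eventually.of_forall hW_nonneg) ((eventually_ge_atTop 0).mono hbound)

theorem tendsto_zero_of_sq_le_mul {ι : Type*} {l : Filter ι} {u W : ι → ℝ} {C : ℝ}
    (hW : Tendsto W l (𝓝 0)) (hu : ∀ x, u x ^ 2 ≤ C * W x) : Tendsto u l (𝓝 0) := by
  refine squeeze_zero_norm (fun x => ?_) (by simpa using (hW.const_mul C).sqrt)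
  rw [Real.norm_eq_abs, ← sqrt_sq_eq_abs]
  exact sqrt_le_sqrt (hu x)

noncomputable def adaptiveLyapunov (γ α e s φ : ℝ) : ℝ :=
  e ^ 2 + s ^ 2 + φ ^ 2 / γ - α * (s * φ)

section
variable {k₁ k₂ γ α : ℝ}

theorem abs_mul_mul_le_of_sq_mul_le_one (hγ : 0 < γ) (hα : α ^ 2 * γ ≤ 1) (s φ : ℝ) :
    |α * (s * φ)| ≤ (s ^ 2 + φ ^ 2 / γ) / 2 := by
  have hφ : α ^ 2 * φ ^ 2 ≤ φ ^ 2 / γ := by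
    rw [le_div_iff₀ hγ]
    nlinarith [sq_nonneg φ]
  rw [abs_le]
  constructor <;> nlinarith [sq_nonneg (s + α * φ), sq_nonneg (s - α * φ)]

theorem energy_le_two_mul_adaptiveLyapunov (hγ : 0 < γ) (hα : α ^ 2 * γ ≤ 1) (e s φ : ℝ) :
    e ^ 2 + s ^ 2 + φ ^ 2 / γ ≤ 2 * adaptiveLyapunov γ α e s φ := by
  have := abs_le.mp (abs_mul_mul_le_of_sq_mul_le_one hγ hα s φ)
  have : 0 ≤ e ^ 2 := sq_nonneg e
  unfold adaptiveLyapunov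
  linarith

theorem two_mul_adaptiveLyapunov_le (hγ : 0 < γ) (hα : α ^ 2 * γ ≤ 1) (e s φ : ℝ) :
    2 * adaptiveLyapunov γ α e s φ ≤ 3 * (e ^ 2 + s ^ 2 + φ ^ 2 / γ) := by
  have := abs_le.mp (abs_mul_mul_le_of_sq_mul_le_one hγ hα s φ)
  have : 0 ≤ e ^ 2 := sq_nonneg e
  unfold adaptiveLyapunov
  linarith

theorem hasDerivAt_adaptiveLyapunov {e s φ : ℝ → ℝ} {t : ℝ} (hγ : γ ≠ 0)
    (he : HasDerivAt e (s t - k₁ * e t) t) (hs : HasDerivAt s (-e t - k₂ * s t + φ t) t)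
    (hφ : HasDerivAt φ (-(γ * s t)) t) :
    HasDerivAt (fun t => adaptiveLyapunov γ α (e t) (s t) (φ t))
      (-2 * k₁ * e t ^ 2 - 2 * k₂ * s t ^ 2 + α * (e t * φ t) + α * k₂ * (s t * φ t)
        - α * φ t ^ 2 + α * γ * s t ^ 2) t := by
  refine ((((he.fun_pow 2).add (hs.fun_pow 2)).add ((hφ.fun_pow 2).div_const γ)).sub
    ((hs.fun_mul hφ).const_mul α)).congr_deriv ?_
  field_simp
  ring

theorem adaptiveLyapunov_deriv_le (hk₁ : 0 < k₁) (hk₂ : 0 < k₂) (hα : 0 ≤ α)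
    (hαγ : 2 * α * γ ≤ k₂) (hαk : α * (1 + k₁ * k₂) ≤ 2 * k₁) (e s φ : ℝ) :
    -2 * k₁ * e ^ 2 - 2 * k₂ * s ^ 2 + α * (e * φ) + α * k₂ * (s * φ) - α * φ ^ 2
      + α * γ * s ^ 2 ≤ -(k₁ * e ^ 2 + k₂ / 2 * s ^ 2 + α / 2 * φ ^ 2) := by
  -- completing the squares in `e` and `s`: `4 k₁` times the gap is a sum of nonnegative terms
  rw [← sub_nonneg, ← mul_nonneg_iff_of_pos_left (by positivity : 0 < 4 * k₁)]
  linear_combination sq_nonneg (2 * k₁ * e - α * φ)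
    + mul_nonneg (mul_pos hk₁ hk₂).le (sq_nonneg (2 * s - α * φ))
    + 2 * mul_nonneg (mul_nonneg hk₁.le (sq_nonneg s)) (sub_nonneg.2 hαγ)
    + mul_nonneg (mul_nonneg hα (sq_nonneg φ)) (sub_nonneg.2 hαk)

theorem exists_pos_adaptiveLyapunov_deriv_le (hk₁ : 0 < k₁) (hk₂ : 0 < k₂) (hγ : 0 < γ)
    (hα : 0 < α) (hαsq : α ^ 2 * γ ≤ 1) (hαγ : 2 * α * γ ≤ k₂)
    (hαk : α * (1 + k₁ * k₂) ≤ 2 * k₁) :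
    ∃ c > 0, ∀ e s φ : ℝ, -2 * k₁ * e ^ 2 - 2 * k₂ * s ^ 2 + α * (e * φ) + α * k₂ * (s * φ)
      - α * φ ^ 2 + α * γ * s ^ 2 ≤ -c * adaptiveLyapunov γ α e s φ := by
  set δ := min (min k₁ (k₂ / 2)) (α * γ / 2)
  have hδ : 0 < δ := by positivity
  refine ⟨2 * δ / 3, by positivity, fun e s φ => ?_⟩
  have hδE : δ * (e ^ 2 + s ^ 2 + φ ^ 2 / γ) ≤ k₁ * e ^ 2 + k₂ / 2 * s ^ 2 + α / 2 * φ ^ 2 := by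
    have hweight : α / 2 * φ ^ 2 = α * γ / 2 * (φ ^ 2 / γ) := by field_simp
    rw [hweight, mul_add, mul_add]
    gcongr
    exacts [(min_le_left _ _).trans (min_le_left _ _),
      (min_le_left _ _).trans (min_le_right _ _), min_le_right _ _]
  have hWE := mul_le_mul_of_nonneg_left (two_mul_adaptiveLyapunov_le hγ hαsq e s φ) hδ.le
  linarith [adaptiveLyapunov_deriv_le hk₁ hk₂ hα.le hαγ hαk e s φ]

theorem exists_adaptiveLyapunov_coupling (hk₁ : 0 < k₁) (hk₂ : 0 < k₂) :
    ∃ α, 0 < α ∧ α ^ 2 * γ ≤ 1 ∧ 2 * α * γ ≤ k₂ ∧ α * (1 + k₁ * k₂) ≤ 2 * k₁ := by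
  have small : ∀ᶠ α in 𝓝 (0 : ℝ),
      α ^ 2 * γ < 1 ∧ 2 * α * γ < k₂ ∧ α * (1 + k₁ * k₂) < 2 * k₁ :=
    (ContinuousAt.eventually_lt (by fun_prop) continuousAt_const (by simp)).and <|
      (ContinuousAt.eventually_lt (by fun_prop) continuousAt_const (by simpa)).and
        (ContinuousAt.eventually_lt (by fun_prop) continuousAt_const (by simpa))
  obtain ⟨α, ⟨h₁, h₂, h₃⟩, hα⟩ :=
    ((small.filter_mono nhdsWithin_le_nhds).and
      (self_mem_nhdsWithin : ∀ᶠ α in 𝓝[>] (0 : ℝ), 0 < α)).exists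
  exact ⟨α, hα, h₁.le, h₂.le, h₃.le⟩

end

theorem tendsto_zero_of_adaptive_error_dynamics {k₁ k₂ γ : ℝ} (hk₁ : 0 < k₁) (hk₂ : 0 < k₂)
    (hγ : 0 < γ) {e s φ : ℝ → ℝ} (he : ∀ t, HasDerivAt e (s t - k₁ * e t) t)
    (hs : ∀ t, HasDerivAt s (-e t - k₂ * s t + φ t) t)
    (hφ : ∀ t, HasDerivAt φ (-(γ * s t)) t) :
    Tendsto e atTop (𝓝 0) ∧ Tendsto s atTop (𝓝 0) ∧ Tendsto φ atTop (𝓝 0) := by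
  obtain ⟨α, hα, hαsq, hαγ, hαk⟩ := exists_adaptiveLyapunov_coupling (γ := γ) hk₁ hk₂
  set W := fun t => adaptiveLyapunov γ α (e t) (s t) (φ t)
  have henergy (t : ℝ) : e t ^ 2 + s t ^ 2 + φ t ^ 2 / γ ≤ 2 * W t :=
    energy_le_two_mul_adaptiveLyapunov hγ hαsq _ _ _
  have hsq_nonneg (t : ℝ) : 0 ≤ e t ^ 2 ∧ 0 ≤ s t ^ 2 ∧ 0 ≤ φ t ^ 2 / γ := by
    refine ⟨?_, ?_, ?_⟩ <;> positivity
  obtain ⟨c, hc, hdecay⟩ := exists_pos_adaptiveLyapunov_deriv_le hk₁ hk₂ hγ hα hαsq hαγ hαk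
  have hW : Tendsto W atTop (𝓝 0) :=
    tendsto_zero_of_hasDerivAt_le_neg_mul_s17 hc (fun t => by linarith [henergy t, hsq_nonneg t])
      (fun t => hasDerivAt_adaptiveLyapunov hγ.ne' (he t) (hs t) (hφ t)) fun t => hdecay _ _ _
  refine ⟨tendsto_zero_of_sq_le_mul (C := 2) hW fun t => ?_,
    tendsto_zero_of_sq_le_mul (C := 2) hW fun t => ?_,
    tendsto_zero_of_sq_le_mul (C := 2 * γ) hW fun t => ?_⟩
  · linarith [henergy t, hsq_nonneg t]
  · linarith [henergy t, hsq_nonneg t]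
  · have : φ t ^ 2 / γ ≤ 2 * W t := by linarith [henergy t, hsq_nonneg t]
    rw [div_le_iff₀ hγ] at this
    linarith

theorem inner_loop_single_channel_adaptive_convergence
    (m γ k₁ k₂ : ℝ) (hm : 0 < m) (hγ : 0 < γ) (hk₁ : 0 < k₁) (hk₂ : 0 < k₂)
    (f : ℝ)
    (e v fhat : ℝ → ℝ)
    (he : ∀ t, HasDerivAt e (v t) t)
    (hv : ∀ t, HasDerivAt v
        (-(1 + k₁ * k₂) * e t - (k₁ + k₂) * v t + (f - fhat t) / m) t)
    (hfhat : ∀ t, HasDerivAt fhat (γ * m * (k₁ * e t + v t)) t) :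
    Tendsto e atTop (nhds 0) ∧ Tendsto v atTop (nhds 0) ∧
      Tendsto fhat atTop (nhds f) := by
  obtain ⟨he₀, hs₀, hφ₀⟩ := tendsto_zero_of_adaptive_error_dynamics hk₁ hk₂ hγ
    (s := fun t => v t + k₁ * e t) (φ := fun t => (f - fhat t) / m)
    (fun t => (he t).congr_deriv (by ring))
    (fun t => ((hv t).add ((he t).const_mul k₁)).congr_deriv (by ring))
    (fun t => (((hfhat t).const_sub f).div_const m).congr_deriv (by field_simp; ring))
  refine ⟨he₀, by simpa using hs₀.sub (he₀.const_mul k₁), ?_⟩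
  simpa [mul_div_cancel₀ _ hm.ne'] using (hφ₀.const_mul m).const_sub f
end
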